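/- In the sugar-chocolate model: let ρ = |x₀⟩⟨x₀| on C² with x₀ = (e₁+e₂)/√2, S = diag(λ₁, λ₂), C = diag(μ₁, μ₂) with |λ₁|²+|λ₂|² = 1, |μ₁|²+|μ₂|² = 1, λ₁λ₂μ₁μ₂ ≠ 0, X the swap matrix [[0,1],[1,0]]. Define ρ_S = S*ρS/tr(|S|²ρ), ρ_S^a = X ρ_S X, ρ_{S→C}^a = C* ρ_S^a C / tr(|C|² ρ_S^a), and the lifting state E*(ρ) = ρ_S ⊗ ρ_{S→C}^a, with P(S=j, C=k) = tr((E_j ⊗ E_k) E*(ρ)) where E_1, E_2 are the standard rank-one projections. Then P(S=1,C=1) + P(S=2,C=1) = |λ₂|²|μ₁|² / (|λ₂|²|μ₁|² + |λ₁|²|μ₂|²). -/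

import Mathlib

open Matrix
open scoped ComplexOrder Kronecker

/-- The neutral state vector x₀ = (e₁ + e₂)/√2. -/
noncomputable def x₀ : Fin 2 → ℂ := fun _ => (Real.sqrt 2 : ℂ)⁻¹

/-- The neutral initial tongue state ρ = |x₀⟩⟨x₀|. -/
noncomputable def ρ₀ : Matrix (Fin 2) (Fin 2) ℂ := vecMulVec x₀ (star x₀)

/-- The adaptive channel ρ ↦ A*ρA / tr(|A|²ρ). -/
noncomputable def chan (A ρ : Matrix (Fin 2) (Fin 2) ℂ) : Matrix (Fin 2) (Fin 2) ℂ :=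
  ((Aᴴ * A * ρ).trace)⁻¹ • (Aᴴ * ρ * A)

/-- The exchanging (swap) operator X. -/
def Xop : Matrix (Fin 2) (Fin 2) ℂ := !![0, 1; 1, 0]

/-- Standard rank-one projections E₁, E₂. -/
def E₁ : Matrix (Fin 2) (Fin 2) ℂ := !![1, 0; 0, 0]
def E₂ : Matrix (Fin 2) (Fin 2) ℂ := !![0, 0; 0, 1]

/-!
Summing over `S` uses `E₁ + E₂ = 1` and `tr ρ_S = 1`, which leaves the `(1,1)` entry of
`ρ_{S→C}^a`. Apart from `X` all operators are diagonal, so only diagonals matter: `ρ_S` has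
diagonal `(|λ₁|², |λ₂|²)`, conjugation by `X` swaps it, and the channel of `C` reweights it by
`(|μ₁|², |μ₂|²)` and renormalises.
-/

lemma E₁_add_E₂ : E₁ + E₂ = 1 := by
  rw [E₁, E₂, one_fin_two]
  ext i j
  fin_cases i <;> fin_cases j <;> simp

lemma trace_E₁_mul (A : Matrix (Fin 2) (Fin 2) ℂ) : (E₁ * A).trace = A 0 0 := by
  simp [E₁, trace_fin_two, vecMul, dotProduct, Fin.sum_univ_two]

lemma ρ₀_apply (i j : Fin 2) : ρ₀ i j = 1 / 2 := by
  have hsqrt : ((Real.sqrt 2 : ℝ) : ℂ) * ((Real.sqrt 2 : ℝ) : ℂ) = 2 := by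
    rw [← Complex.ofReal_mul, Real.mul_self_sqrt zero_le_two]
    norm_num
  simp only [ρ₀, x₀, vecMulVec_apply, Pi.star_apply, Complex.star_def, map_inv₀,
    Complex.conj_ofReal, ← mul_inv, hsqrt]
  norm_num

lemma Xop_mul_mul_Xop_apply_self (ρ : Matrix (Fin 2) (Fin 2) ℂ) (i : Fin 2) :
    (Xop * ρ * Xop) i i = ρ i.rev i.rev := by
  fin_cases i <;> simp [Xop, mul_apply, vecMul, dotProduct, Fin.sum_univ_two]

lemma chan_diagonal_apply_self (d : Fin 2 → ℂ) (ρ : Matrix (Fin 2) (Fin 2) ℂ) (i : Fin 2) :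
    chan (diagonal d) ρ i i =
      Complex.normSq (d i) * ρ i i / ∑ j, Complex.normSq (d j) * ρ j j := by
  have hdiag : (diagonal d)ᴴ * ρ * diagonal d = fun i j => star (d i) * ρ i j * d j := by
    ext i j
    simp [diagonal_conjTranspose, diagonal_mul, mul_diagonal]
  have htrace : ((diagonal d)ᴴ * diagonal d * ρ).trace = ∑ j, Complex.normSq (d j) * ρ j j := by
    simp [trace, diagonal_conjTranspose, diagonal_mul_diagonal, diagonal_mul,
      Complex.normSq_eq_conj_mul_self]
  rw [chan, htrace, Matrix.smul_apply, hdiag, smul_eq_mul, Complex.normSq_eq_conj_mul_self]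
  simp only [Complex.star_def]
  ring

lemma chan_diagonal_ρ₀_apply_self (d : Fin 2 → ℂ) (hd : ∑ j, Complex.normSq (d j) = 1)
    (i : Fin 2) : chan (diagonal d) ρ₀ i i = Complex.normSq (d i) := by
  have hd' : ∑ j, (Complex.normSq (d j) : ℂ) = 1 := by exact_mod_cast hd
  rw [chan_diagonal_apply_self]
  simp only [ρ₀_apply, ← Finset.sum_mul, hd']
  field_simp

lemma trace_chan_diagonal_ρ₀ (d : Fin 2 → ℂ) (hd : ∑ j, Complex.normSq (d j) = 1) :
    (chan (diagonal d) ρ₀).trace = 1 := by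
  simp only [trace, diag, chan_diagonal_ρ₀_apply_self d hd]
  exact_mod_cast hd

theorem stmt_11_general (l₁ l₂ m₁ m₂ : ℂ)
    (hl : Complex.normSq l₁ + Complex.normSq l₂ = 1) :
    ((E₁ ⊗ₖ E₁) * (chan !![l₁, 0; 0, l₂] ρ₀ ⊗ₖ
        chan !![m₁, 0; 0, m₂] (Xop * chan !![l₁, 0; 0, l₂] ρ₀ * Xop))).trace +
    ((E₂ ⊗ₖ E₁) * (chan !![l₁, 0; 0, l₂] ρ₀ ⊗ₖ
        chan !![m₁, 0; 0, m₂] (Xop * chan !![l₁, 0; 0, l₂] ρ₀ * Xop))).trace =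
    ((Complex.normSq l₂ * Complex.normSq m₁ : ℝ) : ℂ) /
      ((Complex.normSq l₂ * Complex.normSq m₁ + Complex.normSq l₁ * Complex.normSq m₂ : ℝ) : ℂ) := by
  have hl' : ∑ j, Complex.normSq (![l₁, l₂] j) = 1 := by simpa using hl
  rw [← diagonal_vec2, ← diagonal_vec2, ← mul_kronecker_mul, ← mul_kronecker_mul,
    trace_kronecker, trace_kronecker, ← add_mul, ← trace_add, ← add_mul, E₁_add_E₂, one_mul, trace_chan_diagonal_ρ₀ _ hl', one_mul,
    trace_E₁_mul, chan_diagonal_apply_self]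
  simp only [Fin.sum_univ_two, Xop_mul_mul_Xop_apply_self, chan_diagonal_ρ₀_apply_self _ hl',
    Fin.isValue, cons_val_zero, cons_val_one, cons_val_fin_one, Fin.rev_zero,
    Fin.reduceLast, Fin.reduceRev, Complex.ofReal_mul, Complex.ofReal_add]
  ring

/-- In the sugar–chocolate model with S = diag(λ₁,λ₂), C = diag(μ₁,μ₂),
ρ_S = S*ρS/tr(|S|²ρ), ρ_S^a = Xρ_SX, ρ_{S→C}^a = C*ρ_S^aC/tr(|C|²ρ_S^a) and lifting
E*(ρ) = ρ_S ⊗ ρ_{S→C}^a, P(S=j,C=k) = tr((E_j⊗E_k)E*(ρ)), one has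
P(S=1,C=1) + P(S=2,C=1) = |λ₂|²|μ₁|² / (|λ₂|²|μ₁|² + |λ₁|²|μ₂|²). -/
theorem stmt_11 (l₁ l₂ m₁ m₂ : ℂ)
    (hl : Complex.normSq l₁ + Complex.normSq l₂ = 1)
    (hm : Complex.normSq m₁ + Complex.normSq m₂ = 1)
    (hne : l₁ * l₂ * m₁ * m₂ ≠ 0) :
    ((E₁ ⊗ₖ E₁) * (chan !![l₁, 0; 0, l₂] ρ₀ ⊗ₖ
        chan !![m₁, 0; 0, m₂] (Xop * chan !![l₁, 0; 0, l₂] ρ₀ * Xop))).trace +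
    ((E₂ ⊗ₖ E₁) * (chan !![l₁, 0; 0, l₂] ρ₀ ⊗ₖ
        chan !![m₁, 0; 0, m₂] (Xop * chan !![l₁, 0; 0, l₂] ρ₀ * Xop))).trace =
    ((Complex.normSq l₂ * Complex.normSq m₁ : ℝ) : ℂ) /
      ((Complex.normSq l₂ * Complex.normSq m₁ + Complex.normSq l₁ * Complex.normSq m₂ : ℝ) : ℂ) :=
  stmt_11_general l₁ l₂ m₁ m₂ hl
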